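/- arXiv:2408.14903 — 3 statements merged into one kernel-verified Lean document; each statement's English description precedes it below -/
import Mathlib

section
/- Under (A2) with constants C and ρ, and for bounded measurable φ: X → ℝ, the functions g_s(x) = Σ_{k=0}^∞ (P_s^k φ̄)(x) satisfy, for all s, s' ∈ S: ‖g_s − g_{s'}‖_∞ ≤ (4C²/(1−ρ)²) osc(φ) · sup_{x∈X} d_TV(P_s(x,·), P_{s'}(x,·)). -/
open MeasureTheory Filter Finset ProbabilityTheory
open scoped ENNReal NNReal Topology

/-- Total variation distance between two measures: `sup_A |μ(A) - ν(A)|`. -/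
noncomputable def tvDist {X : Type*} [MeasurableSpace X] (μ ν : Measure X) : ℝ :=
  ⨆ A : {A : Set X // MeasurableSet A}, |(μ A.1).toReal - (ν A.1).toReal|

/-- `iterK P s k x` is the `k`-step transition probability `P_s^k(x, ·)`. -/
noncomputable def iterK {S X : Type*} [MeasurableSpace X]
    (P : S → X → Measure X) (s : S) : ℕ → X → Measure X
  | 0 => fun x => Measure.dirac x
  | n + 1 => fun x => (P s x).bind (iterK P s n)

/-- Supremum norm `‖f‖_∞ = sup_x |f x|`. -/
noncomputable def supNorm {X : Type*} (f : X → ℝ) : ℝ := ⨆ x, |f x|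

/-- Oscillation `osc(f) = sup_x f x - inf_x f x`. -/
noncomputable def osc {X : Type*} (f : X → ℝ) : ℝ := (⨆ x, f x) - (⨅ x, f x)

/-- The solution of the Poisson equation: `g_s x = Σ_{k=0}^∞ (P_s^k φ̄)(x)`
where `φ̄ = φ - π(φ)`. -/
noncomputable def gfun {S X : Type*} [MeasurableSpace X]
    (P : S → X → Measure X) (π : Measure X) (φ : X → ℝ) (s : S) (x : X) : ℝ :=
  ∑' k : ℕ, ∫ y, (φ y - ∫ z, φ z ∂π) ∂(iterK P s k x)

/-- `Pg P π φ s x = (P_s g_s)(x)`. -/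
noncomputable def Pg {S X : Type*} [MeasurableSpace X]
    (P : S → X → Measure X) (π : Measure X) (φ : X → ℝ) (s : S) (x : X) : ℝ :=
  ∫ y, gfun P π φ s y ∂(P s x)

/-!
Write `ψ = φ - π(φ)`, `A = P_s`, `B = P_{s'}` and `D = sup_x d_TV(P_s(x,·), P_{s'}(x,·))`.
The noncommutative telescoping `Aᵏ⁺¹ψ - Bᵏ⁺¹ψ = ∑_{i+j=k} Bⁱ wⱼ` with `wⱼ = (A - B) Aʲ ψ`
reduces everything to one estimate: since `|μ f - ν f| ≤ osc f · d_TV(μ, ν)`, (A2) gives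
`|Pᵏ f| ≤ osc f · C ρᵏ` for every bounded `π`-centred `f`. Hence `|Aʲψ| ≤ osc φ · C ρʲ`,
so `|wⱼ| ≤ 2 osc φ · C ρʲ · D`; as `wⱼ` is `π`-centred by invariance of `π`,
`|Bⁱ wⱼ| ≤ C ρⁱ · 4 osc φ · C ρʲ · D`, and the double geometric series gives `4C²/(1-ρ)²`.
-/

section Oscillation

variable {X : Type*} {f : X → ℝ} {B : ℝ}

lemma bddAbove_range_of_abs_le (hB : ∀ x, |f x| ≤ B) : BddAbove (Set.range f) :=
  ⟨B, by rintro _ ⟨x, rfl⟩; exact (abs_le.1 (hB x)).2⟩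

lemma bddBelow_range_of_abs_le (hB : ∀ x, |f x| ≤ B) : BddBelow (Set.range f) :=
  ⟨-B, by rintro _ ⟨x, rfl⟩; exact (abs_le.1 (hB x)).1⟩

lemma osc_nonneg [Nonempty X] (hB : ∀ x, |f x| ≤ B) : 0 ≤ osc f :=
  sub_nonneg.2 <| (ciInf_le (bddBelow_range_of_abs_le hB) (Classical.arbitrary X)).trans
    (le_ciSup (bddAbove_range_of_abs_le hB) _)

lemma osc_le_two_mul [Nonempty X] (hB : ∀ x, |f x| ≤ B) : osc f ≤ 2 * B := by
  have hsup : (⨆ x, f x) ≤ B := ciSup_le fun x => (abs_le.1 (hB x)).2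
  have hinf : -B ≤ ⨅ x, f x := le_ciInf fun x => (abs_le.1 (hB x)).1
  rw [osc]
  linarith

lemma osc_sub_const [Nonempty X] (hB : ∀ x, |f x| ≤ B) (c : ℝ) :
    osc (fun x => f x - c) = osc f := by
  rw [osc, osc, ← ciSup_sub (bddAbove_range_of_abs_le hB),
    ← ciInf_sub (bddBelow_range_of_abs_le hB)]
  ring

end Oscillation

section BddMeasurable

variable {X : Type*} [MeasurableSpace X] {f g : X → ℝ}

def BddMeasurable (f : X → ℝ) : Prop := Measurable f ∧ ∃ B, ∀ x, |f x| ≤ B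

lemma bddMeasurable_const (c : ℝ) : BddMeasurable fun _ : X => c :=
  ⟨measurable_const, |c|, fun _ => le_rfl⟩

lemma BddMeasurable.sub (hf : BddMeasurable f) (hg : BddMeasurable g) :
    BddMeasurable (f - g) := by
  obtain ⟨hfm, B, hB⟩ := hf
  obtain ⟨hgm, B', hB'⟩ := hg
  exact ⟨hfm.sub hgm, B + B', fun x => (abs_sub _ _).trans (add_le_add (hB x) (hB' x))⟩

lemma BddMeasurable.integrable (hf : BddMeasurable f) (μ : Measure X) [IsFiniteMeasure μ] :
    Integrable f μ :=
  Integrable.of_bound (f := f) hf.1.aestronglyMeasurable _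
    (Filter.Eventually.of_forall hf.2.choose_spec)

lemma abs_integral_le_of_abs_le {μ : Measure X} [IsProbabilityMeasure μ] {B : ℝ}
    (hB : ∀ x, |f x| ≤ B) : |∫ x, f x ∂μ| ≤ B := by
  simpa using norm_integral_le_of_norm_le_const (μ := μ) (f := f) (Filter.Eventually.of_forall hB)

end BddMeasurable

section TotalVariation

variable {X : Type*} [MeasurableSpace X] (μ ν : Measure X)

lemma tvDist_nonneg : 0 ≤ tvDist μ ν :=
  Real.iSup_nonneg fun _ => abs_nonneg _

variable [IsProbabilityMeasure μ] [IsProbabilityMeasure ν]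

lemma abs_measureReal_sub_le_one (A : Set X) : |μ.real A - ν.real A| ≤ 1 :=
  abs_sub_le_of_nonneg_of_le measureReal_nonneg measureReal_le_one measureReal_nonneg
    measureReal_le_one

lemma tvDist_le_one : tvDist μ ν ≤ 1 :=
  Real.iSup_le (fun A => abs_measureReal_sub_le_one μ ν A.1) zero_le_one

lemma abs_measureReal_sub_le_tvDist {A : Set X} (hA : MeasurableSet A) :
    |μ.real A - ν.real A| ≤ tvDist μ ν :=
  le_ciSup (f := fun A : {A : Set X // MeasurableSet A} => |μ.real A.1 - ν.real A.1|)
    ⟨1, by rintro _ ⟨A, rfl⟩; exact abs_measureReal_sub_le_one μ ν A⟩ ⟨A, hA⟩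

variable {μ ν}

/-- The layer-cake formula writes both integrals over the same super-level sets. -/
lemma abs_integral_sub_le_mul_tvDist_of_nonneg_of_le {f : X → ℝ} (hf : Measurable f) {M : ℝ}
    (hf0 : ∀ x, 0 ≤ f x) (hfM : ∀ x, f x ≤ M) :
    |∫ x, f x ∂μ - ∫ x, f x ∂ν| ≤ M * tvDist μ ν := by
  have hM : 0 ≤ M := (hf0 _).trans (hfM (nonempty_of_isProbabilityMeasure μ).some)
  have hf' : BddMeasurable f := ⟨hf, M, fun x => abs_le.2 ⟨by linarith [hf0 x], hfM x⟩⟩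
  have layer_cake : ∀ (m : Measure X) [IsProbabilityMeasure m],
      ∫ x, f x ∂m = ∫ t in Set.Ioc 0 M, m.real {x | t ≤ f x} := fun m _ =>
    (hf'.integrable m).integral_eq_integral_Ioc_meas_le
      (Filter.Eventually.of_forall hf0) (Filter.Eventually.of_forall hfM)
  have layer_integrable : ∀ (m : Measure X) [IsProbabilityMeasure m],
      IntegrableOn (fun t => m.real {x | t ≤ f x}) (Set.Ioc 0 M) := fun m _ => by
    have hanti : Antitone fun t : ℝ => m.real {x | t ≤ f x} := fun t t' htt' =>
      measureReal_mono fun x hx => htt'.trans hx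
    refine Measure.integrableOn_of_bounded (M := 1) (by simp)
      hanti.measurable.aestronglyMeasurable (Filter.Eventually.of_forall fun t => ?_)
    rw [Real.norm_eq_abs, abs_of_nonneg measureReal_nonneg]
    exact measureReal_le_one
  rw [layer_cake μ, layer_cake ν, ← integral_sub (layer_integrable μ) (layer_integrable ν),
    ← Real.norm_eq_abs]
  refine (norm_setIntegral_le_of_norm_le_const measure_Ioc_lt_top
    fun t _ => abs_measureReal_sub_le_tvDist μ ν (hf measurableSet_Ici)).trans_eq ?_
  rw [Real.volume_real_Ioc, sub_zero, max_eq_left hM, mul_comm]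

lemma abs_integral_sub_le_osc_mul_tvDist {f : X → ℝ} (hf : BddMeasurable f) :
    |∫ x, f x ∂μ - ∫ x, f x ∂ν| ≤ osc f * tvDist μ ν := by
  have : Nonempty X := nonempty_of_isProbabilityMeasure μ
  obtain ⟨B, hB⟩ := hf.2
  set c := ⨅ x, f x
  have hshift : ∀ (m : Measure X) [IsProbabilityMeasure m],
      ∫ x, (f x - c) ∂m = ∫ x, f x ∂m - c := fun m _ => by
    rw [integral_sub (hf.integrable m) (integrable_const c)]
    simp
  have := abs_integral_sub_le_mul_tvDist_of_nonneg_of_le (μ := μ) (ν := ν)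
    (f := fun x => f x - c) (hf.1.sub measurable_const) (M := osc f)
    (fun x => sub_nonneg.2 (ciInf_le (bddBelow_range_of_abs_le hB) x))
    (fun x => sub_le_sub_right (le_ciSup (bddAbove_range_of_abs_le hB) x) c)
  rwa [hshift, hshift, sub_sub_sub_cancel_right] at this

end TotalVariation

section MarkovOperator

variable {X : Type*} [MeasurableSpace X]

noncomputable def markovOp (κ : X → Measure X) (f : X → ℝ) (x : X) : ℝ := ∫ y, f y ∂κ x

variable {κ : X → Measure X} {f g : X → ℝ}

lemma measurable_markovOp (hκ : Measurable κ) (hf : Measurable f) : Measurable (markovOp κ f) :=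
  (hf.stronglyMeasurable.integral_kernel (κ := ⟨κ, hκ⟩)).measurable

lemma MeasureTheory.Measure.integral_bind (hκ : Measurable κ) {μ : Measure X}
    (hf : Integrable f (μ.bind κ)) :
    ∫ y, f y ∂μ.bind κ = ∫ x, ∫ y, f y ∂κ x ∂μ := by
  let K : Kernel X X := ⟨κ, hκ⟩
  have hbind : μ.bind κ = (K ∘ₖ Kernel.const Unit μ) () :=
    Measure.comp_eq_comp_const_apply (κ := K)
  rw [hbind] at hf ⊢
  rw [Kernel.integral_comp hf]
  simp [K]

variable [∀ x, IsProbabilityMeasure (κ x)]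

lemma isProbabilityMeasure_bind (hκ : Measurable κ) (μ : Measure X) [IsProbabilityMeasure μ] :
    IsProbabilityMeasure (μ.bind κ) :=
  ⟨by simp [Measure.bind_apply MeasurableSet.univ hκ.aemeasurable]⟩

lemma bddMeasurable_markovOp (hκ : Measurable κ) (hf : BddMeasurable f) :
    BddMeasurable (markovOp κ f) :=
  ⟨measurable_markovOp hκ hf.1, hf.2.choose, fun _ => abs_integral_le_of_abs_le hf.2.choose_spec⟩

lemma markovOp_sub (hf : BddMeasurable f) (hg : BddMeasurable g) :
    markovOp κ (f - g) = markovOp κ f - markovOp κ g :=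
  funext fun _ => integral_sub' (hf.integrable _) (hg.integrable _)

lemma markovOp_sum {ι : Type*} (s : Finset ι) {F : ι → X → ℝ}
    (hF : ∀ i ∈ s, BddMeasurable (F i)) :
    markovOp κ (∑ i ∈ s, F i) = ∑ i ∈ s, markovOp κ (F i) := by
  funext x
  simp only [markovOp, Finset.sum_apply]
  exact integral_finsetSum s fun i hi => (hF i hi).integrable _

lemma integral_markovOp_of_bind_eq (hκ : Measurable κ) {π : Measure X} [IsProbabilityMeasure π]
    (hinv : π.bind κ = π) (hf : BddMeasurable f) :
    ∫ x, markovOp κ f x ∂π = ∫ x, f x ∂π := by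
  have := isProbabilityMeasure_bind hκ π
  conv_rhs => rw [← hinv]
  exact (Measure.integral_bind hκ (hf.integrable _)).symm

end MarkovOperator

section Iterates

variable {S X : Type*} [MeasurableSpace X] {P : S → X → Measure X}

lemma measurable_iterK (hP : ∀ t, Measurable (P t)) (t : S) (k : ℕ) :
    Measurable (iterK P t k) := by
  induction k with
  | zero => exact Measure.measurable_dirac
  | succ k ih => exact (Measure.measurable_bind' ih).comp (hP t)

lemma markovOp_iterK_zero {f : X → ℝ} (hf : Measurable f) (t : S) :
    markovOp (iterK P t 0) f = f :=
  funext fun x => integral_dirac' f x hf.stronglyMeasurable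

/-- `(P_s - P_{s'}) P_s^j f`. -/
noncomputable def iterDefect (P : S → X → Measure X) (s s' : S) (f : X → ℝ) (j : ℕ) : X → ℝ :=
  markovOp (P s) (markovOp (iterK P s j) f) - markovOp (P s') (markovOp (iterK P s j) f)

variable [∀ t x, IsProbabilityMeasure (P t x)]

lemma isProbabilityMeasure_iterK (hP : ∀ t, Measurable (P t)) (t : S) (k : ℕ) (x : X) :
    IsProbabilityMeasure (iterK P t k x) := by
  induction k generalizing x with
  | zero => exact inferInstanceAs (IsProbabilityMeasure (Measure.dirac x))
  | succ k ih =>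
    have := ih
    exact isProbabilityMeasure_bind (measurable_iterK hP t k) (P t x)

lemma markovOp_iterK_succ (hP : ∀ t, Measurable (P t)) {f : X → ℝ} (hf : BddMeasurable f)
    (t : S) (k : ℕ) :
    markovOp (iterK P t (k + 1)) f = markovOp (P t) (markovOp (iterK P t k) f) := by
  have := isProbabilityMeasure_iterK hP t
  funext x
  have := isProbabilityMeasure_bind (measurable_iterK hP t k) (P t x)
  exact Measure.integral_bind (measurable_iterK hP t k) (hf.integrable _)

lemma bddMeasurable_markovOp_iterK (hP : ∀ t, Measurable (P t)) {f : X → ℝ}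
    (hf : BddMeasurable f) (t : S) (k : ℕ) : BddMeasurable (markovOp (iterK P t k) f) :=
  have := isProbabilityMeasure_iterK hP t k
  bddMeasurable_markovOp (measurable_iterK hP t k) hf

lemma bddMeasurable_iterDefect (hP : ∀ t, Measurable (P t)) {f : X → ℝ} (hf : BddMeasurable f)
    (s s' : S) (j : ℕ) : BddMeasurable (iterDefect P s s' f j) :=
  (bddMeasurable_markovOp (hP s) (bddMeasurable_markovOp_iterK hP hf s j)).sub
    (bddMeasurable_markovOp (hP s') (bddMeasurable_markovOp_iterK hP hf s j))

/-- The noncommutative telescoping `Aᵏ⁺¹ - Bᵏ⁺¹ = ∑_{i + j = k} Bⁱ (A - B) Aʲ`. -/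
lemma markovOp_iterK_succ_sub (hP : ∀ t, Measurable (P t)) {f : X → ℝ} (hf : BddMeasurable f)
    (s s' : S) (k : ℕ) :
    markovOp (iterK P s (k + 1)) f - markovOp (iterK P s' (k + 1)) f =
      ∑ p ∈ antidiagonal k, markovOp (iterK P s' p.1) (iterDefect P s s' f p.2) := by
  have hw := bddMeasurable_iterDefect hP hf s s'
  induction k with
  | zero =>
    rw [markovOp_iterK_succ hP hf, markovOp_iterK_succ hP hf, Finset.Nat.antidiagonal_zero,
      sum_singleton, markovOp_iterK_zero (hw 0).1]
    rfl
  | succ k ih =>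
    rw [markovOp_iterK_succ hP hf s (k + 1), markovOp_iterK_succ hP hf s' (k + 1),
      Finset.Nat.sum_antidiagonal_succ, markovOp_iterK_zero (hw _).1]
    calc _ = iterDefect P s s' f (k + 1) + markovOp (P s')
          (markovOp (iterK P s (k + 1)) f - markovOp (iterK P s' (k + 1)) f) := by
          rw [markovOp_sub (bddMeasurable_markovOp_iterK hP hf s _)
            (bddMeasurable_markovOp_iterK hP hf s' _), iterDefect]
          abel
      _ = _ := by
          rw [ih, markovOp_sum _ fun p _ => bddMeasurable_markovOp_iterK hP (hw p.2) s' p.1]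
          congr 1
          exact sum_congr rfl fun p _ => (markovOp_iterK_succ hP (hw p.2) s' p.1).symm

end Iterates

lemma abs_tsum_sum_antidiagonal_le {u : ℕ → ℕ → ℝ} {a b : ℕ → ℝ} (ha : Summable a)
    (hb : Summable b) (ha0 : 0 ≤ a) (hb0 : 0 ≤ b) (hu : ∀ i j, |u i j| ≤ a i * b j) :
    |∑' k, ∑ p ∈ antidiagonal k, u p.1 p.2| ≤ (∑' i, a i) * ∑' j, b j := by
  have hab : Summable fun p : ℕ × ℕ => a p.1 * b p.2 := ha.mul_of_nonneg hb ha0 hb0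
  have hbound : ∀ k, |∑ p ∈ antidiagonal k, u p.1 p.2| ≤ ∑ p ∈ antidiagonal k, a p.1 * b p.2 :=
    fun k => (abs_sum_le_sum_abs _ _).trans (sum_le_sum fun p _ => hu p.1 p.2)
  have hsum : Summable fun k => ∑ p ∈ antidiagonal k, a p.1 * b p.2 :=
    summable_sum_mul_antidiagonal_of_summable_mul hab
  have habs : Summable fun k => |∑ p ∈ antidiagonal k, u p.1 p.2| :=
    hsum.of_nonneg_of_le (fun _ => abs_nonneg _) hbound
  rw [ha.tsum_mul_tsum_eq_tsum_sum_antidiagonal hb hab]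
  calc _ ≤ ∑' k, |∑ p ∈ antidiagonal k, u p.1 p.2| :=
        norm_tsum_le_tsum_norm (f := fun k => ∑ p ∈ antidiagonal k, u p.1 p.2) habs
    _ ≤ _ := habs.tsum_le_tsum hbound hsum

section UniformErgodicity

variable {S X : Type*} [MeasurableSpace X] {P : S → X → Measure X}
  [∀ t x, IsProbabilityMeasure (P t x)] {π : Measure X} [IsProbabilityMeasure π] {C ρ : ℝ}
  {f : X → ℝ}

lemma abs_markovOp_iterK_le (hP : ∀ t, Measurable (P t)) {t : S}
    (hA2 : ∀ x k, tvDist (iterK P t k x) π ≤ C * ρ ^ k) (hf : BddMeasurable f)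
    (hπf : ∫ x, f x ∂π = 0) (k : ℕ) (x : X) :
    |markovOp (iterK P t k) f x| ≤ osc f * (C * ρ ^ k) := by
  have := isProbabilityMeasure_iterK hP t k x
  have : Nonempty X := nonempty_of_isProbabilityMeasure π
  have := abs_integral_sub_le_osc_mul_tvDist (μ := iterK P t k x) (ν := π) hf
  rw [hπf, sub_zero] at this
  exact this.trans (mul_le_mul_of_nonneg_left (hA2 x k) (osc_nonneg hf.2.choose_spec))

lemma summable_markovOp_iterK (hP : ∀ t, Measurable (P t)) {t : S}
    (hA2 : ∀ x k, tvDist (iterK P t k x) π ≤ C * ρ ^ k) (hρ0 : 0 ≤ ρ) (hρ1 : ρ < 1)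
    (hf : BddMeasurable f) (hπf : ∫ x, f x ∂π = 0) (x : X) :
    Summable fun k => markovOp (iterK P t k) f x :=
  Summable.of_norm_bounded ((summable_geometric_of_lt_one hρ0 hρ1).mul_left (osc f * C))
    fun k => (abs_markovOp_iterK_le hP hA2 hf hπf k x).trans_eq (by ring)

variable {s s' : S} {D : ℝ}

lemma abs_iterDefect_le (hP : ∀ t, Measurable (P t))
    (hA2 : ∀ x k, tvDist (iterK P s k x) π ≤ C * ρ ^ k) (hf : BddMeasurable f)
    (hπf : ∫ x, f x ∂π = 0) (hD : ∀ x, tvDist (P s x) (P s' x) ≤ D) (j : ℕ) (x : X) :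
    |iterDefect P s s' f j x| ≤ 2 * (osc f * (C * ρ ^ j)) * D := by
  have : Nonempty X := nonempty_of_isProbabilityMeasure π
  have hbound := abs_markovOp_iterK_le hP hA2 hf hπf j
  have hosc := osc_le_two_mul hbound
  refine (abs_integral_sub_le_osc_mul_tvDist (bddMeasurable_markovOp_iterK hP hf s j)).trans ?_
  exact mul_le_mul hosc (hD x) (tvDist_nonneg _ _)
    (by linarith [(abs_nonneg _).trans (hbound x)])

lemma integral_iterDefect (hP : ∀ t, Measurable (P t)) (hinv : ∀ t, π.bind (P t) = π)
    (hf : BddMeasurable f) (j : ℕ) : ∫ x, iterDefect P s s' f j x ∂π = 0 := by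
  have hPf := bddMeasurable_markovOp_iterK hP hf s j
  rw [iterDefect, integral_sub' ((bddMeasurable_markovOp (hP s) hPf).integrable π)
    ((bddMeasurable_markovOp (hP s') hPf).integrable π),
    integral_markovOp_of_bind_eq (hP s) (hinv s) hPf,
    integral_markovOp_of_bind_eq (hP s') (hinv s') hPf, sub_self]

lemma abs_markovOp_iterK_iterDefect_le (hP : ∀ t, Measurable (P t))
    (hinv : ∀ t, π.bind (P t) = π) (hA2 : ∀ t x k, tvDist (iterK P t k x) π ≤ C * ρ ^ k)
    (hρ0 : 0 ≤ ρ) (hf : BddMeasurable f) (hπf : ∫ x, f x ∂π = 0)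
    (hD : ∀ x, tvDist (P s x) (P s' x) ≤ D) (x : X) (i j : ℕ) :
    |markovOp (iterK P s' i) (iterDefect P s s' f j) x|
      ≤ C * ρ ^ i * (4 * osc f * C * D * ρ ^ j) := by
  have : Nonempty X := nonempty_of_isProbabilityMeasure π
  have hC : 0 ≤ C := by simpa [iterK] using (tvDist_nonneg _ _).trans (hA2 s x 0)
  have hosc : osc (iterDefect P s s' f j) ≤ 4 * osc f * C * D * ρ ^ j :=
    (osc_le_two_mul (abs_iterDefect_le hP (hA2 s) hf hπf hD j)).trans_eq (by ring)
  calc _ ≤ osc (iterDefect P s s' f j) * (C * ρ ^ i) :=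
        abs_markovOp_iterK_le hP (hA2 s') (bddMeasurable_iterDefect hP hf s s' j)
          (integral_iterDefect hP hinv hf j) i x
    _ ≤ _ := by rw [mul_comm]; exact mul_le_mul_of_nonneg_left hosc (by positivity)

/-- Summing the double series over `i + j = k` factorises the bound as
`(∑ C ρⁱ) (∑ 4 osc f C D ρʲ)`. -/
lemma abs_tsum_markovOp_iterK_sub_le (hP : ∀ t, Measurable (P t))
    (hinv : ∀ t, π.bind (P t) = π) (hA2 : ∀ t x k, tvDist (iterK P t k x) π ≤ C * ρ ^ k)
    (hρ0 : 0 ≤ ρ) (hρ1 : ρ < 1) (hf : BddMeasurable f) (hπf : ∫ x, f x ∂π = 0)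
    (hD : ∀ x, tvDist (P s x) (P s' x) ≤ D) (x : X) :
    |∑' k, (markovOp (iterK P s k) f x - markovOp (iterK P s' k) f x)|
      ≤ 4 * C ^ 2 / (1 - ρ) ^ 2 * osc f * D := by
  have : Nonempty X := nonempty_of_isProbabilityMeasure π
  have hC : 0 ≤ C := by simpa [iterK] using (tvDist_nonneg _ _).trans (hA2 s x 0)
  have hD0 : 0 ≤ D := (tvDist_nonneg _ _).trans (hD x)
  have hosc : 0 ≤ osc f := osc_nonneg hf.2.choose_spec
  have hgeo := summable_geometric_of_lt_one hρ0 hρ1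
  have hsum := (summable_markovOp_iterK hP (hA2 s) hρ0 hρ1 hf hπf x).sub
    (summable_markovOp_iterK hP (hA2 s') hρ0 hρ1 hf hπf x)
  rw [hsum.tsum_eq_zero_add, markovOp_iterK_zero hf.1, markovOp_iterK_zero hf.1, sub_self,
    zero_add]
  have htel : ∀ k, markovOp (iterK P s (k + 1)) f x - markovOp (iterK P s' (k + 1)) f x =
      ∑ p ∈ antidiagonal k, markovOp (iterK P s' p.1) (iterDefect P s s' f p.2) x := fun k => by
    simpa only [Pi.sub_apply, Finset.sum_apply] using
      congrFun (markovOp_iterK_succ_sub hP hf s s' k) x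
  simp only [htel]
  calc _ ≤ (∑' i, C * ρ ^ i) * ∑' j, 4 * osc f * C * D * ρ ^ j :=
        abs_tsum_sum_antidiagonal_le (hgeo.mul_left C) (hgeo.mul_left _)
          (fun i => by positivity) (fun j => by positivity)
          (abs_markovOp_iterK_iterDefect_le hP hinv hA2 hρ0 hf hπf hD x)
    _ = _ := by
        rw [tsum_mul_left, tsum_mul_left, tsum_geometric_of_lt_one hρ0 hρ1]
        field_simp

end UniformErgodicity

/-- Under (A2), the Poisson solutions satisfy, for all `s, s'`:
`‖g_s − g_{s'}‖_∞ ≤ (4C²/(1−ρ)²) osc(φ) sup_x d_TV(P_s(x,·), P_{s'}(x,·))`. -/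
theorem stmt5 {S X : Type*} [MeasurableSpace S] [MeasurableSpace X]
    (P : S → X → Measure X) (π : Measure X) [IsProbabilityMeasure π]
    (hPprob : ∀ s x, IsProbabilityMeasure (P s x))
    (hPmeas : ∀ A : Set X, MeasurableSet A → Measurable fun p : S × X => P p.1 p.2 A)
    (hinv : ∀ s, π.bind (P s) = π)
    (C ρ : ℝ) (hρ : ρ ∈ Set.Ico (0 : ℝ) 1)
    (hA2 : ∀ s x k, tvDist (iterK P s k x) π ≤ C * ρ ^ k)
    (φ : X → ℝ) (hφm : Measurable φ) (hφb : ∃ B, ∀ x, |φ x| ≤ B)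
    (s s' : S) :
    supNorm (fun x => gfun P π φ s x - gfun P π φ s' x)
      ≤ 4 * C ^ 2 / (1 - ρ) ^ 2 * osc φ * ⨆ x, tvDist (P s x) (P s' x) := by
  obtain ⟨hρ0, hρ1⟩ := hρ
  have : Nonempty X := nonempty_of_isProbabilityMeasure π
  have := hPprob
  have hP : ∀ t, Measurable (P t) := fun t => Measure.measurable_of_measurable_coe _
    fun A hA => (hPmeas A hA).comp measurable_prodMk_left
  have hφ : BddMeasurable φ := ⟨hφm, hφb⟩
  set c := ∫ z, φ z ∂π
  have hψ : BddMeasurable fun y => φ y - c := hφ.sub (bddMeasurable_const c)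
  have hψπ : ∫ y, (φ y - c) ∂π = 0 := by
    rw [integral_sub (hφ.integrable π) (integrable_const c)]
    simp [c]
  have hD : ∀ x, tvDist (P s x) (P s' x) ≤ ⨆ x, tvDist (P s x) (P s' x) :=
    le_ciSup ⟨1, by rintro _ ⟨x, rfl⟩; exact tvDist_le_one _ _⟩
  have hsum t x := summable_markovOp_iterK hP (hA2 t) hρ0 hρ1 hψ hψπ x
  refine ciSup_le fun x => ?_
  rw [← osc_sub_const hφb.choose_spec c]
  calc |gfun P π φ s x - gfun P π φ s' x|
      = |∑' k, (markovOp (iterK P s k) (fun y => φ y - c) x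
          - markovOp (iterK P s' k) (fun y => φ y - c) x)| := by
        rw [(hsum s x).tsum_sub (hsum s' x)]
        rfl
    _ ≤ _ := abs_tsum_markovOp_iterK_sub_le hP hinv hA2 hρ0 hρ1 hψ hψπ hD x
end

section
/- Assume the adaptation has the stochastic-approximation form S_k = S_{k−1} + γ_k H_k and that (A7) holds with Lipschitz constant L. If Σ_{k=1}^∞ (γ_k/k^p) E[‖H_k‖] < ∞ for some p > 0, then the adaptation is strongly p-waning: the random variables D_k = min{1, L γ_k ‖H_k‖} satisfy sup_{x∈X} d_TV(P_{S_k}(x,·), P_{S_{k−1}}(x,·)) ≤ D_k and n^{−p} Σ_{k=1}^n D_k → 0 almost surely. -/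
/-! The first bound is (A7) applied to `S_k - S_{k-1} = γ_k H_k`, capped by `d_TV ≤ 1`.
For the second, the hypothesis says `Σ_k γ_k ‖H_k‖ / k^p` has finite expectation, so it is
finite almost surely, and Kronecker's lemma with weights `k^p` turns this into
`n^{-p} Σ_{k ≤ n} |L| γ_k ‖H_k‖ → 0`, which dominates `n^{-p} Σ_{k ≤ n} D_k`. -/

open MeasureTheory Filter Finset
open scoped ENNReal NNReal Topology

lemma tvDist_le_one_s13 {X : Type*} [MeasurableSpace X] (μ ν : Measure X)
    [IsProbabilityMeasure μ] [IsProbabilityMeasure ν] : tvDist μ ν ≤ 1 :=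
  ciSup_le fun _ => abs_sub_le_of_nonneg_of_le ENNReal.toReal_nonneg measureReal_le_one
    ENNReal.toReal_nonneg measureReal_le_one

lemma ae_summable_norm_of_summable_integral_norm {Ω E ι : Type*} [MeasurableSpace Ω]
    [NormedAddCommGroup E] [Countable ι] {μ : Measure Ω} {f : ι → Ω → E}
    (hf : ∀ i, Integrable (f i) μ) (hs : Summable fun i => ∫ ω, ‖f i ω‖ ∂μ) :
    ∀ᵐ ω ∂μ, Summable fun i => ‖f i ω‖ := by
  refine summable_norm_of_tsum_eLpNorm_ne_top le_rfl (fun i => (hf i).1) ?_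
  have hnorm : ∀ i, eLpNorm (f i) 1 μ = ENNReal.ofReal (∫ ω, ‖f i ω‖ ∂μ) := fun i => by
    rw [eLpNorm_one_eq_lintegral_enorm, ofReal_integral_norm_eq_lintegral_enorm (hf i)]
  simp only [hnorm,
    ← ENNReal.ofReal_tsum_of_nonneg (fun i => integral_nonneg fun _ => norm_nonneg _) hs]
  exact ENNReal.ofReal_ne_top

section Kronecker

variable {x w : ℕ → ℝ}

lemma sum_range_le_add_mul_tsum_div (hx : ∀ k, 0 ≤ x k) (hw : Monotone w)
    (hsum : Summable fun k => x k / w k) {m n : ℕ} (hmn : m ≤ n) (hwm : 0 < w m) :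
    ∑ k ∈ range (n + 1), x k ≤ ∑ k ∈ range m, x k + w n * ∑' k, x (k + m) / w (k + m) := by
  rw [← sum_range_add_sum_Ico x (by omega : m ≤ n + 1)]
  gcongr
  have hwk : ∀ k ∈ Ico m (n + 1), 0 < w k ∧ w k ≤ w n := fun k hk => by
    obtain ⟨hmk, hkn⟩ := mem_Ico.1 hk
    exact ⟨hwm.trans_le (hw hmk), hw (by omega)⟩
  calc ∑ k ∈ Ico m (n + 1), x k
      = ∑ k ∈ Ico m (n + 1), w k * (x k / w k) :=
        sum_congr rfl fun k hk => (mul_div_cancel₀ _ (hwk k hk).1.ne').symm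
    _ ≤ ∑ k ∈ Ico m (n + 1), w n * (x k / w k) :=
        sum_le_sum fun k hk => mul_le_mul_of_nonneg_right (hwk k hk).2
          (div_nonneg (hx k) (hwk k hk).1.le)
    _ = w n * ∑ k ∈ range (n + 1 - m), x (k + m) / w (k + m) := by
        rw [← mul_sum, sum_Ico_eq_sum_range]
        simp only [add_comm m]
    _ ≤ w n * ∑' k, x (k + m) / w (k + m) := by
        refine mul_le_mul_of_nonneg_left ?_ (hwm.le.trans (hw hmn))
        exact ((summable_nat_add_iff m).2 hsum).sum_le_tsum _
          fun k _ => div_nonneg (hx _) (hwm.le.trans (hw (by omega)))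

/-- Kronecker's lemma for nonnegative terms. -/
theorem tendsto_sum_range_div_of_summable_div (hx : ∀ k, 0 ≤ x k) (hw : Monotone w)
    (hw_top : Tendsto w atTop atTop) (hsum : Summable fun k => x k / w k) :
    Tendsto (fun n => (∑ k ∈ range (n + 1), x k) / w n) atTop (𝓝 0) := by
  have hpos : ∀ᶠ n in atTop, 0 < w n := hw_top.eventually_gt_atTop 0
  refine tendsto_order.2 ⟨fun ε hε => ?_, fun ε hε => ?_⟩
  · filter_upwards [hpos] with n hn
    exact hε.trans_le (div_nonneg (sum_nonneg fun k _ => hx k) hn.le)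
  have htail : Tendsto (fun m => ∑' k, x (k + m) / w (k + m)) atTop (𝓝 0) :=
    tendsto_sum_nat_add fun k => x k / w k
  obtain ⟨m, hwm, hm⟩ := (hpos.and (htail.eventually (gt_mem_nhds (half_pos hε)))).exists
  have hhead : Tendsto (fun n => (∑ k ∈ range m, x k) / w n) atTop (𝓝 0) :=
    tendsto_const_nhds.div_atTop hw_top
  filter_upwards [hpos, eventually_ge_atTop m, hhead.eventually (gt_mem_nhds (half_pos hε))]
    with n hwn hmn hn
  rw [div_lt_iff₀ hwn] at hn ⊢
  calc ∑ k ∈ range (n + 1), x k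
      ≤ ∑ k ∈ range m, x k + w n * ∑' k, x (k + m) / w (k + m) :=
        sum_range_le_add_mul_tsum_div hx hw hsum hmn hwm
    _ < ε / 2 * w n + w n * (ε / 2) := add_lt_add hn (mul_lt_mul_of_pos_left hm hwn)
    _ = ε * w n := by ring

end Kronecker

lemma abs_sum_Icc_min_one_le (a : ℕ → ℝ) (n : ℕ) :
    |∑ k ∈ Icc 1 n, min 1 (a k)| ≤ ∑ k ∈ range (n + 1), |a k| := by
  have habs : ∀ k, |min 1 (a k)| ≤ |a k| := fun k => abs_le.2
    ⟨le_min (by linarith [abs_nonneg (a k)]) (neg_abs_le _),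
      (min_le_right _ _).trans (le_abs_self _)⟩
  calc |∑ k ∈ Icc 1 n, min 1 (a k)|
      ≤ ∑ k ∈ Icc 1 n, |a k| := (abs_sum_le_sum_abs _ _).trans (sum_le_sum fun k _ => habs k)
    _ ≤ ∑ k ∈ range (n + 1), |a k| :=
        sum_le_sum_of_subset_of_nonneg (fun k hk => by simp only [mem_Icc, mem_range] at hk ⊢; omega)
          fun k _ _ => abs_nonneg _

theorem stmt13_general {E X : Type*} [NormedAddCommGroup E] [NormedSpace ℝ E]
    [MeasurableSpace X]
    (P : E → X → Measure X)
    (hPprob : ∀ s x, IsProbabilityMeasure (P s x))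
    {Ω : Type*} [mΩ : MeasurableSpace Ω] (μ : Measure Ω)
    (Sset : Set E) (Sp : ℕ → Ω → E) (hSmem : ∀ k ω, Sp k ω ∈ Sset)
    (γ : ℕ → ℝ) (hγ : ∀ k, 0 < γ k)
    (H : ℕ → Ω → E)
    (hHint : ∀ k, Integrable (fun ω => ‖H k ω‖) μ)
    (hSA : ∀ k, 1 ≤ k → ∀ ω, Sp k ω = Sp (k - 1) ω + γ k • H k ω)
    (L : ℝ)
    (hA7 : ∀ s ∈ Sset, ∀ s' ∈ Sset, ∀ x, tvDist (P s x) (P s' x) ≤ L * ‖s - s'‖)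
    (p : ℝ) (hp : 0 < p)
    (h : Summable fun k : ℕ =>
      γ (k + 1) / ((k : ℝ) + 1) ^ p * ∫ ω, ‖H (k + 1) ω‖ ∂μ) :
    (∀ k, 1 ≤ k → ∀ ω x, tvDist (P (Sp k ω) x) (P (Sp (k - 1) ω) x)
        ≤ min 1 (L * γ k * ‖H k ω‖)) ∧
    (∀ᵐ ω ∂μ, Tendsto
      (fun n : ℕ => (∑ k ∈ Finset.Icc 1 n, min 1 (L * γ k * ‖H k ω‖)) / (n : ℝ) ^ p)
      atTop (𝓝 0)) := by
  refine ⟨fun k hk ω x => ?_, ?_⟩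
  · have := hPprob (Sp k ω) x
    have := hPprob (Sp (k - 1) ω) x
    have hstep : ‖Sp k ω - Sp (k - 1) ω‖ = γ k * ‖H k ω‖ := by
      rw [hSA k hk ω, add_sub_cancel_left, norm_smul, Real.norm_of_nonneg (hγ k).le]
    refine le_min (tvDist_le_one_s13 _ _) ?_
    simpa only [hstep, mul_assoc] using hA7 _ (hSmem k ω) _ (hSmem (k - 1) ω) x
  set g : ℕ → Ω → ℝ := fun k ω => γ k / (k : ℝ) ^ p * ‖H k ω‖
  have hg_norm : ∀ k ω, ‖g k ω‖ = g k ω := fun k ω =>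
    Real.norm_of_nonneg (mul_nonneg (div_nonneg (hγ k).le (by positivity)) (norm_nonneg _))
  have hg_sum : Summable fun k => ∫ ω, ‖g k ω‖ ∂μ := by
    refine (summable_nat_add_iff 1).1 (h.congr fun k => ?_)
    simp only [hg_norm, g, integral_const_mul]
    push_cast; rfl
  filter_upwards [ae_summable_norm_of_summable_integral_norm
    (fun k => (hHint k).const_mul _) hg_sum] with ω hω
  have hkron := tendsto_sum_range_div_of_summable_div (x := fun k => |L * γ k * ‖H k ω‖|)
    (fun k => abs_nonneg _)
    (fun a b hab => Real.rpow_le_rpow (Nat.cast_nonneg _) (Nat.cast_le.2 hab) hp.le)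
    ((tendsto_rpow_atTop hp).comp tendsto_natCast_atTop_atTop)
    ((hω.mul_left |L|).congr fun k => by
      simp only [hg_norm, g, abs_mul, abs_of_pos (hγ k), abs_norm]; ring)
  refine squeeze_zero_norm (fun n => ?_) hkron
  rw [norm_div, Real.norm_eq_abs, Real.norm_of_nonneg (by positivity)]
  exact div_le_div_of_nonneg_right (abs_sum_Icc_min_one_le _ n) (by positivity)

/-- If the adaptation has the stochastic-approximation form
`S_k = S_{k-1} + γ_k H_k` and (A7) holds with Lipschitz constant `L`, and
`Σ_{k=1}^∞ (γ_k/k^p) E[‖H_k‖] < ∞` for some `p > 0`, then the adaptation is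
strongly `p`-waning: the random variables `D_k = min{1, L γ_k ‖H_k‖}` dominate
`sup_x d_TV(P_{S_k}(x,·), P_{S_{k-1}}(x,·))` and
`n^{-p} Σ_{k=1}^n D_k → 0` almost surely. -/
theorem stmt13 {E X : Type*} [NormedAddCommGroup E] [NormedSpace ℝ E]
    [MeasurableSpace E] [BorelSpace E] [MeasurableSpace X]
    (P : E → X → Measure X)
    (hPprob : ∀ s x, IsProbabilityMeasure (P s x))
    (hPmeas : ∀ A : Set X, MeasurableSet A → Measurable fun p : E × X => P p.1 p.2 A)
    {Ω : Type*} [mΩ : MeasurableSpace Ω] (μ : Measure Ω) [IsProbabilityMeasure μ]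
    (F : Filtration ℕ mΩ)
    (Sset : Set E) (Sp : ℕ → Ω → E) (hSmem : ∀ k ω, Sp k ω ∈ Sset)
    (hSadapted : ∀ k, Measurable[F k] (Sp k))
    (γ : ℕ → ℝ) (hγ : ∀ k, 0 < γ k)
    (H : ℕ → Ω → E) (hHmeas : ∀ k, Measurable[F k] (H k))
    (hHint : ∀ k, Integrable (fun ω => ‖H k ω‖) μ)
    (hSA : ∀ k, 1 ≤ k → ∀ ω, Sp k ω = Sp (k - 1) ω + γ k • H k ω)
    (L : ℝ)
    (hA7 : ∀ s ∈ Sset, ∀ s' ∈ Sset, ∀ x, tvDist (P s x) (P s' x) ≤ L * ‖s - s'‖)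
    (p : ℝ) (hp : 0 < p)
    (h : Summable fun k : ℕ =>
      γ (k + 1) / ((k : ℝ) + 1) ^ p * ∫ ω, ‖H (k + 1) ω‖ ∂μ) :
    (∀ k, 1 ≤ k → ∀ ω x, tvDist (P (Sp k ω) x) (P (Sp (k - 1) ω) x)
        ≤ min 1 (L * γ k * ‖H k ω‖)) ∧
    (∀ᵐ ω ∂μ, Tendsto
      (fun n : ℕ => (∑ k ∈ Finset.Icc 1 n, min 1 (L * γ k * ‖H k ω‖)) / (n : ℝ) ^ p)
      atTop (𝓝 0)) :=
  stmt13_general P hPprob (mΩ := mΩ) μ Sset Sp hSmem γ hγ H hHint hSA L hA7 p hp h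
end

section
/- There exist two Markov transition matrices P_a and P_b on the three-point state space {1,2,3}, namely P_a given by P_a(1,1) = 1/2, P_a(1,2) = 1/2, P_a(2,3) = 1, P_a(3,1) = 1 (all other entries 0) and P_b given by P_b(1,1) = 1/2, P_b(1,3) = 1/2, P_b(2,1) = 1, P_b(3,2) = 1 (all other entries 0), such that: (i) both P_a and P_b leave π = (1/2, 1/4, 1/4) invariant; (ii) the two-element family {P_a, P_b} satisfies simultaneous uniform ergodicity, i.e., there exist C < ∞ and ρ ∈ [0,1) with d_TV(P_s^k(x,·), π) ≤ C ρ^k for all x ∈ {1,2,3}, s ∈ {a,b}, k ≥ 0; and (iii) the deterministic sequence defined by X_0 = 2 and the alternating kernels (applying P_a at odd steps and P_b at even steps) has X_k = 3 for all odd k and X_k = 2 for all even k, so for φ(x) = 1(x = 1) the averages (1/n) Σ_{k=1}^n φ(X_k) = 0 for all n and fail to converge to π(φ) = 1/2. -/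
/-!
Write `Q` for the matrix all of whose rows are `π`. If `M` is stochastic and `π` is
`M`-invariant then `MQ = QM = Q² = Q`, hence `M^(m+k) - Q = (M - Q)^m (M^k - Q)`. For both
`P_a` and `P_b` the cube of `M - Q` has `ℓ^∞`-operator norm `1/2 ≤ (4/5)^3`, so
`‖M^k - Q‖ ≤ 2 (4/5)^k`, and every row of `M^k - Q` is the signed measure `P^k(x,·) - π`.
The alternating chain started at state `2` just oscillates between states `2` and `3`.
-/

open Filter
open scoped Topology Matrix

/-- The transition matrix `P_a` on states `{1,2,3}` (encoded as `Fin 3`):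
`P_a(1,1) = 1/2, P_a(1,2) = 1/2, P_a(2,3) = 1, P_a(3,1) = 1`. -/
noncomputable def Pa : Matrix (Fin 3) (Fin 3) ℝ := !![1/2, 1/2, 0; 0, 0, 1; 1, 0, 0]

/-- The transition matrix `P_b` on states `{1,2,3}` (encoded as `Fin 3`):
`P_b(1,1) = 1/2, P_b(1,3) = 1/2, P_b(2,1) = 1, P_b(3,2) = 1`. -/
noncomputable def Pb : Matrix (Fin 3) (Fin 3) ℝ := !![1/2, 0, 1/2; 1, 0, 0; 0, 1, 0]

/-- The probability vector `π = (1/2, 1/4, 1/4)`. -/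
noncomputable def pivec : Fin 3 → ℝ := ![1/2, 1/4, 1/4]

/-- The deterministic trajectory: `X_0 = 2`, `X_k = 3` for odd `k` and
`X_k = 2` for even `k ≥ 2` (states `2`, `3` are encoded as `1`, `2` in
`Fin 3`). -/
def Xseq : ℕ → Fin 3 := fun k => if Odd k then 2 else 1

attribute [local instance] Matrix.linftyOpSeminormedAddCommGroup Matrix.linftyOpNormedRing

theorem pow_add_sub_eq_sub_pow_mul {R : Type*} [Ring R] {a q : R} (haq : a * q = q)
    (hqa : q * a = q) (hqq : q * q = q) (m k : ℕ) :
    a ^ (m + k) - q = (a - q) ^ m * (a ^ k - q) := by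
  have hqpow : ∀ j, q * a ^ j = q := fun j => by
    induction j with
    | zero => simp
    | succ j ih => rw [pow_succ, ← mul_assoc, ih, hqa]
  induction m with
  | zero => simp
  | succ m ih =>
    calc a ^ (m + 1 + k) - q = (a - q) * (a ^ (m + k) - q) := by
          rw [Nat.add_right_comm, pow_succ', sub_mul, mul_sub, mul_sub, hqpow, haq, hqq]
          abel
      _ = (a - q) ^ (m + 1) * (a ^ k - q) := by rw [ih, pow_succ', mul_assoc]

theorem le_mul_pow_of_le_pow_mul {u : ℕ → ℝ} {m : ℕ} {C ρ : ℝ} (hm : 0 < m) (hρ : 0 ≤ ρ)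
    (hstep : ∀ k, u (k + m) ≤ ρ ^ m * u k) (hbase : ∀ r < m, u r ≤ C * ρ ^ r) (k : ℕ) :
    u k ≤ C * ρ ^ k := by
  induction k using Nat.strong_induction_on with
  | _ k ih =>
    rcases lt_or_ge k m with hk | hk
    · exact hbase k hk
    · obtain ⟨j, rfl⟩ := Nat.exists_eq_add_of_le' hk
      calc u (j + m) ≤ ρ ^ m * u j := hstep j
        _ ≤ ρ ^ m * (C * ρ ^ j) := mul_le_mul_of_nonneg_left (ih j (by omega)) (pow_nonneg hρ m)
        _ = C * ρ ^ (j + m) := by ring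

namespace Matrix

variable {m n R α : Type*} [Fintype n]

theorem mul_replicateRow_of_sum_row_eq_one [Semiring R] {M : Matrix m n R}
    (hM : ∀ i, ∑ j, M i j = 1) (v : α → R) : M * replicateRow n v = replicateRow m v := by
  ext i j
  simp [mul_apply, replicateRow_apply, ← Finset.sum_mul, hM]

theorem replicateRow_mul_of_vecMul_eq [Semiring R] {M : Matrix n n R} {v : n → R}
    (hv : v ᵥ* M = v) : replicateRow m v * M = replicateRow m v := by
  rw [← replicateRow_vecMul, hv]

theorem norm_sum_apply_le_linfty_opNorm [Fintype m] [SeminormedAddCommGroup α]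
    (A : Matrix m n α) (i : m) (s : Finset n) : ‖∑ j ∈ s, A i j‖ ≤ ‖A‖ := by
  have hrow : ∑ j, ‖A i j‖₊ ≤ ‖A‖₊ := by
    rw [linfty_opNNNorm_def]
    exact Finset.le_sup (f := fun i => ∑ j, ‖A i j‖₊) (Finset.mem_univ i)
  calc ‖∑ j ∈ s, A i j‖ ≤ ∑ j ∈ s, ‖A i j‖ := norm_sum_le _ _
    _ ≤ ∑ j, ‖A i j‖ := Finset.sum_le_univ_sum_of_nonneg fun _ => norm_nonneg _
    _ ≤ ‖A‖ := by simpa using NNReal.coe_le_coe.2 hrow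

theorem linfty_opNorm_le_of_sum_norm_row_le [Fintype m] [SeminormedAddCommGroup α]
    {A : Matrix m n α} {c : ℝ} (hc : 0 ≤ c) (h : ∀ i, ∑ j, ‖A i j‖ ≤ c) : ‖A‖ ≤ c := by
  lift c to NNReal using hc
  have : ‖A‖₊ ≤ c := by
    rw [linfty_opNNNorm_def]
    exact Finset.sup_le fun i _ => by simpa [← NNReal.coe_le_coe] using h i
  simpa using NNReal.coe_le_coe.2 this

variable [DecidableEq n]

theorem abs_sum_pow_apply_sub_sum_le {M : Matrix n n ℝ} {π : n → ℝ} (hM : ∀ i, ∑ j, M i j = 1)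
    (hπM : π ᵥ* M = π) (hπ : ∑ j, π j = 1) {m : ℕ} (hm : 0 < m) {C ρ : ℝ} (hρ : 0 ≤ ρ)
    (hcontr : ‖(M - replicateRow n π) ^ m‖ ≤ ρ ^ m)
    (hbase : ∀ r < m, ‖M ^ r - replicateRow n π‖ ≤ C * ρ ^ r) (k : ℕ) (x : n) (A : Finset n) :
    |∑ y ∈ A, (M ^ k) x y - ∑ y ∈ A, π y| ≤ C * ρ ^ k := by
  set Q := replicateRow n π
  have hMQ : M * Q = Q := mul_replicateRow_of_sum_row_eq_one hM π
  have hQM : Q * M = Q := replicateRow_mul_of_vecMul_eq hπM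
  have hQQ : Q * Q = Q := mul_replicateRow_of_sum_row_eq_one (fun _ => hπ) π
  have hdecay : ∀ k, ‖M ^ k - Q‖ ≤ C * ρ ^ k := by
    refine le_mul_pow_of_le_pow_mul hm hρ (fun k => ?_) hbase
    rw [add_comm, pow_add_sub_eq_sub_pow_mul hMQ hQM hQQ]
    exact (norm_mul_le _ _).trans (mul_le_mul_of_nonneg_right hcontr (norm_nonneg _))
  calc |∑ y ∈ A, (M ^ k) x y - ∑ y ∈ A, π y| = ‖∑ y ∈ A, (M ^ k - Q) x y‖ := by
        simp [Q, Finset.sum_sub_distrib, replicateRow_apply]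
    _ ≤ C * ρ ^ k := (norm_sum_apply_le_linfty_opNorm _ x A).trans (hdecay k)

end Matrix

open Matrix

theorem replicateRow_pivec : replicateRow (Fin 3) pivec =
    !![1/2, 1/4, 1/4; 1/2, 1/4, 1/4; 1/2, 1/4, 1/4] := by
  ext i j; fin_cases i <;> fin_cases j <;> rfl

theorem norm_sub_replicateRow_pivec_pow_three_le {M : Matrix (Fin 3) (Fin 3) ℝ}
    (hM : M ∈ ({Pa, Pb} : Set (Matrix (Fin 3) (Fin 3) ℝ))) :
    ‖(M - replicateRow (Fin 3) pivec) ^ 3‖ ≤ (4 / 5) ^ 3 := by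
  rw [replicateRow_pivec, pow_three]
  refine linfty_opNorm_le_of_sum_norm_row_le (by norm_num) fun i => ?_
  rcases hM with rfl | rfl <;> fin_cases i <;>
    norm_num [Pa, Pb, mul_fin_three, Fin.sum_univ_three, cons_val_two, vecHead, vecTail,
      abs_of_nonneg, abs_of_nonpos]

theorem norm_pow_sub_replicateRow_pivec_le {M : Matrix (Fin 3) (Fin 3) ℝ}
    (hM : M ∈ ({Pa, Pb} : Set (Matrix (Fin 3) (Fin 3) ℝ))) {r : ℕ} (hr : r < 3) :
    ‖M ^ r - replicateRow (Fin 3) pivec‖ ≤ 2 * (4 / 5) ^ r := by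
  rw [replicateRow_pivec]
  refine linfty_opNorm_le_of_sum_norm_row_le (by positivity) fun i => ?_
  interval_cases r <;> rcases hM with rfl | rfl <;> fin_cases i <;>
    norm_num [Pa, Pb, sq, one_fin_three, mul_fin_three, Fin.sum_univ_three, cons_val_two,
      vecHead, vecTail, abs_of_nonneg, abs_of_nonpos]

theorem Pa_sum_row (x : Fin 3) : ∑ y, Pa x y = 1 := by
  fin_cases x <;> norm_num [Pa, Fin.sum_univ_three, cons_val_two, vecHead, vecTail]

theorem Pb_sum_row (x : Fin 3) : ∑ y, Pb x y = 1 := by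
  fin_cases x <;> norm_num [Pb, Fin.sum_univ_three, cons_val_two, vecHead, vecTail]

theorem Pa_nonneg (x y : Fin 3) : 0 ≤ Pa x y := by
  fin_cases x <;> fin_cases y <;> norm_num [Pa]

theorem Pb_nonneg (x y : Fin 3) : 0 ≤ Pb x y := by
  fin_cases x <;> fin_cases y <;> norm_num [Pb]

theorem pivec_vecMul_Pa : pivec ᵥ* Pa = pivec := by
  ext y
  fin_cases y <;>
    norm_num [Pa, pivec, vecMul, dotProduct, Fin.sum_univ_three, cons_val_two, vecHead, vecTail]

theorem pivec_vecMul_Pb : pivec ᵥ* Pb = pivec := by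
  ext y
  fin_cases y <;>
    norm_num [Pb, pivec, vecMul, dotProduct, Fin.sum_univ_three, cons_val_two, vecHead, vecTail]

theorem sum_pivec : ∑ y, pivec y = 1 := by
  norm_num [pivec, Fin.sum_univ_three, cons_val_two, vecHead, vecTail]

theorem abs_sum_pow_apply_sub_sum_pivec_le {M : Matrix (Fin 3) (Fin 3) ℝ}
    (hM : M ∈ ({Pa, Pb} : Set (Matrix (Fin 3) (Fin 3) ℝ))) (k : ℕ) (x : Fin 3)
    (A : Finset (Fin 3)) :
    |∑ y ∈ A, (M ^ k) x y - ∑ y ∈ A, pivec y| ≤ 2 * (4 / 5) ^ k := by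
  have hstoch : (∀ i, ∑ j, M i j = 1) ∧ pivec ᵥ* M = pivec := by
    rcases hM with rfl | rfl
    exacts [⟨Pa_sum_row, pivec_vecMul_Pa⟩, ⟨Pb_sum_row, pivec_vecMul_Pb⟩]
  exact abs_sum_pow_apply_sub_sum_le hstoch.1 hstoch.2 sum_pivec three_pos (by norm_num)
    (norm_sub_replicateRow_pivec_pow_three_le hM)
    (fun _ hr => norm_pow_sub_replicateRow_pivec_le hM hr) k x A

theorem Xseq_of_odd {k : ℕ} (hk : Odd k) : Xseq k = 2 := if_pos hk

theorem Xseq_of_even {k : ℕ} (hk : Even k) : Xseq k = 1 := if_neg (Nat.not_odd_iff_even.2 hk)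

theorem Xseq_ne_zero (k : ℕ) : Xseq k ≠ 0 := by
  rcases Nat.even_or_odd k with hk | hk
  · rw [Xseq_of_even hk]; decide
  · rw [Xseq_of_odd hk]; decide

theorem transition_Xseq_eq_one (k : ℕ) :
    (if Odd (k + 1) then Pa else Pb) (Xseq k) (Xseq (k + 1)) = 1 := by
  rcases Nat.even_or_odd k with hk | hk
  · rw [if_pos hk.add_one, Xseq_of_even hk, Xseq_of_odd hk.add_one]
    norm_num [Pa, cons_val_two, vecHead, vecTail]
  · rw [if_neg (Nat.not_odd_iff_even.2 hk.add_one), Xseq_of_odd hk, Xseq_of_even hk.add_one]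
    norm_num [Pb, cons_val_two, vecHead, vecTail]

theorem average_indicator_Xseq_eq_zero (n : ℕ) :
    (∑ k ∈ Finset.Icc 1 n, (if Xseq k = 0 then (1 : ℝ) else 0)) / n = 0 := by
  simp [Xseq_ne_zero]

/-- `P_a` and `P_b` are Markov transition matrices on the
three-point space which (i) both leave `π = (1/2, 1/4, 1/4)` invariant;
(ii) satisfy simultaneous uniform ergodicity; (iii) yet alternating them
(`P_a` at odd steps, `P_b` at even steps) started from `X_0 = 2` produces the
deterministic trajectory `X_k = 3` (odd `k`), `X_k = 2` (even `k`), whose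
ergodic averages of `φ = 1(x = 1)` are `0` for all `n` and fail to converge
to `π(φ) = 1/2`. -/
theorem stmt19 :
    -- P_a and P_b are Markov transition matrices
    (∀ x, ∑ y, Pa x y = 1) ∧ (∀ x y, 0 ≤ Pa x y) ∧
    (∀ x, ∑ y, Pb x y = 1) ∧ (∀ x y, 0 ≤ Pb x y) ∧
    -- (i) both leave π invariant
    (∀ y, ∑ x, pivec x * Pa x y = pivec y) ∧
    (∀ y, ∑ x, pivec x * Pb x y = pivec y) ∧
    -- (ii) simultaneous uniform ergodicity of the family {P_a, P_b}
    (∃ C ρ : ℝ, 0 ≤ ρ ∧ ρ < 1 ∧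
      ∀ M ∈ ({Pa, Pb} : Set (Matrix (Fin 3) (Fin 3) ℝ)),
        ∀ (k : ℕ) (x : Fin 3) (A : Finset (Fin 3)),
          |∑ y ∈ A, (M ^ k) x y - ∑ y ∈ A, pivec y| ≤ C * ρ ^ k) ∧
    -- (iii) the alternating deterministic trajectory
    Xseq 0 = 1 ∧
    (∀ k : ℕ, (if Odd (k + 1) then Pa else Pb) (Xseq k) (Xseq (k + 1)) = 1) ∧
    (∀ k : ℕ, Odd k → Xseq k = 2) ∧
    (∀ k : ℕ, Even k → Xseq k = 1) ∧
    -- ergodic averages of φ = 1(x = 1) vanish and fail the LLN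
    (∀ n : ℕ, (∑ k ∈ Finset.Icc 1 n, (if Xseq k = 0 then (1 : ℝ) else 0)) / n = 0) ∧
    (∑ y, pivec y * (if y = 0 then (1 : ℝ) else 0)) = 1 / 2 ∧
    ¬ Tendsto (fun n : ℕ =>
        (∑ k ∈ Finset.Icc 1 n, (if Xseq k = 0 then (1 : ℝ) else 0)) / n)
      atTop (𝓝 (1 / 2)) := by
  refine ⟨Pa_sum_row, Pa_nonneg, Pb_sum_row, Pb_nonneg, congrFun pivec_vecMul_Pa,
    congrFun pivec_vecMul_Pb,
    ⟨2, 4 / 5, by norm_num, by norm_num, fun _ hM => abs_sum_pow_apply_sub_sum_pivec_le hM⟩,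
    Xseq_of_even Even.zero, transition_Xseq_eq_one, fun _ => Xseq_of_odd, fun _ => Xseq_of_even,
    average_indicator_Xseq_eq_zero, by simp [pivec], fun h => ?_⟩
  simp only [average_indicator_Xseq_eq_zero] at h
  norm_num at h
end
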